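/- arXiv:2402.16729 — 7 statements merged into one kernel-verified Lean document; each statement's English description precedes it below -/
import Mathlib

section
/- For all positive natural numbers a, b, c, we have (a ∸ b) ∸ c = a ∸ (b · c), where a ∸ c := a / gcd(a, c). -/
/-- `a ∸ c := a / gcd(a, c)`. -/
def dotdiv (a c : ℕ) : ℕ := a / Nat.gcd a c

theorem stmt1 (a b c : ℕ) (ha : 0 < a) (hb : 0 < b) (hc : 0 < c) :
    dotdiv (dotdiv a b) c = dotdiv a (b * c) := by
  have key : ∀ x y : ℕ, 0 < x → 0 < y → ∀ p,
      (dotdiv x y).factorization p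
        = x.factorization p - min (x.factorization p) (y.factorization p) := by
    intro x y hx hy p
    unfold dotdiv
    rw [Nat.factorization_div (Nat.gcd_dvd_left _ _), Nat.factorization_gcd hx.ne' hy.ne']
    simp [Finsupp.inf_apply]
  have hab : 0 < dotdiv a b := Nat.div_pos (Nat.le_of_dvd ha (Nat.gcd_dvd_left a b))
    (Nat.gcd_pos_of_pos_left _ ha)
  have h1 : 0 < dotdiv (dotdiv a b) c := Nat.div_pos
    (Nat.le_of_dvd hab (Nat.gcd_dvd_left _ c)) (Nat.gcd_pos_of_pos_left _ hab)
  have h2 : 0 < dotdiv a (b * c) := Nat.div_pos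
    (Nat.le_of_dvd ha (Nat.gcd_dvd_left _ _)) (Nat.gcd_pos_of_pos_left _ ha)
  refine Nat.eq_of_factorization_eq h1.ne' h2.ne' fun p => ?_
  rw [key _ _ hab hc, key _ _ ha hb, key _ _ ha (Nat.mul_pos hb hc),
    Nat.factorization_mul hb.ne' hc.ne']
  simp only [Finsupp.add_apply]
  omega
end

section
/- Let p be a prime. Then the directed cycle C_p has no p-ary polymorphism f satisfying f(x_1, x_2, ..., x_p) = f(x_2, ..., x_p, x_1) for all inputs. That is, there is no homomorphism f : C_p^p → C_p that is invariant under cyclic shifts of its arguments. -/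
/-- Let `p` be a prime. The directed cycle `C_p` (vertices `ZMod p`, edges `(k, k+1)`)
has no `p`-ary polymorphism that is invariant under cyclic shifts of its arguments. -/
theorem stmt5 (p : ℕ) (hp : p.Prime) :
    ¬ ∃ f : (Fin p → ZMod p) → ZMod p,
      (∀ x y : Fin p → ZMod p, (∀ i, y i = x i + 1) → f y = f x + 1) ∧
      (∀ x : Fin p → ZMod p, f (fun i => x (finRotate p i)) = f x) := by
  haveI : Fact p.Prime := ⟨hp⟩
  rintro ⟨f, hedge, hrot⟩
  set x : Fin p → ZMod p := fun i => (i.val : ZMod p) with hx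
  have h1 : ∀ i, x (finRotate p i) = x i + 1 := by
    intro i
    obtain ⟨n, rfl⟩ := Nat.exists_eq_succ_of_ne_zero hp.pos.ne'
    simp only [hx, finRotate_succ_apply]
    rcases eq_or_ne i (Fin.last n) with rfl | h
    · simp [ZMod.natCast_self]
    · rw [Fin.val_add_one_of_lt (Fin.lt_last_iff_ne_last.mpr h)]
      push_cast; ring
  have h2 := hedge x (fun i => x (finRotate p i)) h1
  rw [hrot x] at h2
  have : (1 : ZMod p) = 0 := by linear_combination -h2
  exact one_ne_zero this
end

section
/- The transitive tournament T_3 on vertices {0,1,2} with edges {(0,1),(0,2),(1,2)} has no quasi-Maltsev polymorphism, i.e., there is no homomorphism f from T_3^3 to T_3 satisfying f(y,y,x) = f(x,x,x) = f(x,y,y) for all x, y. -/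
/-- The transitive tournament `T₃` (vertices `Fin 3`, edge `i → j` iff `i < j`)
has no quasi-Maltsev polymorphism. -/
theorem stmt7 :
    ¬ ∃ f : Fin 3 → Fin 3 → Fin 3 → Fin 3,
      (∀ x y z x' y' z' : Fin 3, x < x' → y < y' → z < z' → f x y z < f x' y' z') ∧
      (∀ x y : Fin 3, f y y x = f x x x ∧ f x x x = f x y y) := by
  rintro ⟨f, hm, hq⟩
  have h1 : f 0 0 1 = f 1 1 1 := (hq 1 0).1
  have h2 : f 1 1 1 = f 1 2 2 := (hq 1 2).2
  have h3 : f 0 0 1 < f 1 2 2 := hm 0 0 1 1 2 2 (by decide) (by decide) (by decide)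
  rw [h1, h2] at h3
  exact lt_irrefl _ h3
end

section
/- Let (T, r) be a finite rooted tree (an orientation of a tree with a distinguished vertex r) that admits an automorphism fixing r which is not the identity. Then (T, r) admits a non-injective endomorphism fixing r. -/
/-!
Choose a vertex `x` moved by `φ` as close to `r` as possible; its neighbour `p` on the way to `r`
is fixed. Since `T` is a tree, deleting the edge `xp` splits it into the branch `S` hanging at `x`
and a part containing `p` and `r`. The map that acts as `φ` on `S` and as the identity elsewhere is
still an endomorphism, because the only edge leaving `S` ends at the fixed vertex `p`. It identifies
`x` with `φ x`, which lies outside `S` as a second neighbour of `p`.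
-/

namespace SimpleGraph

variable {V : Type*} {G : SimpleGraph V}

lemma Connected.exists_adj_dist_lt_and_reachable_deleteEdges (hG : G.Connected) {x r : V}
    (hxr : x ≠ r) :
    ∃ p, G.Adj x p ∧ G.dist p r < G.dist x r ∧ (G.deleteEdges {s(x, p)}).Reachable p r := by
  obtain ⟨w, hw, hlen⟩ := hG.exists_path_of_dist x r
  cases w with
  | nil => exact absurd rfl hxr
  | cons hxp tail =>
    refine ⟨_, hxp, ?_, reachable_deleteEdges_iff_exists_walk.mpr ⟨tail, fun h => ?_⟩⟩
    · have := G.dist_le tail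
      rw [Walk.length_cons] at hlen
      omega
    · exact ((Walk.cons_isPath_iff _ _).mp hw).2 (tail.fst_mem_support_of_mem_edges h)

lemma eq_of_adj_of_reachable_deleteEdges_of_not_reachable {x p a b : V} (hab : G.Adj a b)
    (ha : (G.deleteEdges {s(x, p)}).Reachable x a)
    (hb : ¬ (G.deleteEdges {s(x, p)}).Reachable x b) : b = p := by
  have hedge : s(a, b) = s(x, p) := by
    by_contra hne
    exact hb (ha.trans (Adj.reachable (deleteEdges_adj.mpr ⟨hab, hne⟩)))
  rcases Sym2.eq_iff.mp hedge with ⟨-, rfl⟩ | ⟨-, rfl⟩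
  · rfl
  · exact absurd Reachable.rfl hb

end SimpleGraph

lemma map_rel_piecewise_id {V : Type*} {E : V → V → Prop} {φ : V → V}
    (hφ : ∀ a b, E a b → E (φ a) (φ b)) (S : Set V) [DecidablePred (· ∈ S)] {p : V}
    (hp : φ p = p) (hS : ∀ a b, E a b ∨ E b a → a ∈ S → b ∉ S → b = p) :
    ∀ a b, E a b → E (S.piecewise φ id a) (S.piecewise φ id b) := by
  intro a b hab
  by_cases ha : a ∈ S <;> by_cases hb : b ∈ S <;>
    simp only [Set.piecewise_eq_of_mem, Set.piecewise_eq_of_notMem, ha, hb, not_false_eq_true,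
      id_eq]
  · exact hφ a b hab
  · obtain rfl := hS a b (.inl hab) ha hb
    simpa only [hp] using hφ a b hab
  · obtain rfl := hS b a (.inr hab) hb ha
    simpa only [hp] using hφ a b hab
  · exact hab

open SimpleGraph in
theorem stmt11_general {V : Type} (E : V → V → Prop)
    (G : SimpleGraph V) (hG : ∀ a b, G.Adj a b ↔ (E a b ∨ E b a))
    (htree : G.IsTree)
    (r : V) (φ : V → V)
    (hhom : ∀ a b, E a b → E (φ a) (φ b))
    (hr : φ r = r)
    (hne : φ ≠ id) :
    ∃ ψ : V → V, (∀ a b, E a b → E (ψ a) (ψ b)) ∧ ψ r = r ∧ ¬ Function.Injective ψ := by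
  classical
  obtain ⟨x, hx : φ x ≠ x, hmin⟩ :=
    (InvImage.wf (G.dist · r) wellFounded_lt).has_min {v | φ v ≠ v} (Function.ne_iff.mp hne)
  have hxr : x ≠ r := fun h => hx (h ▸ hr)
  obtain ⟨p, hxp, hpx, hpr⟩ := htree.connected.exists_adj_dist_lt_and_reachable_deleteEdges hxr
  have hp : φ p = p := not_not.mp fun h => hmin p h hpx
  set S : Set V := {v | (G.deleteEdges {s(x, p)}).Reachable x v}
  have hpS : p ∉ S := isBridge_iff.mp (isAcyclic_iff_forall_adj_isBridge.mp htree.isAcyclic hxp)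
  have hφxS : φ x ∉ S := by
    have hφxp : G.Adj (φ x) p := by
      simpa only [hp] using (hG _ _).mpr ((hG x p).mp hxp |>.imp (hhom _ _) (hhom _ _))
    have hedge : s(φ x, p) ≠ s(x, p) := fun h => hx (Sym2.congr_left.mp h)
    exact fun h => hpS (h.trans (Adj.reachable (deleteEdges_adj.mpr ⟨hφxp, hedge⟩)))
  refine ⟨S.piecewise φ id, map_rel_piecewise_id hhom S hp fun a b hab ha hb =>
    eq_of_adj_of_reachable_deleteEdges_of_not_reachable ((hG a b).mpr hab) ha hb, ?_, ?_⟩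
  · exact Set.piecewise_eq_of_notMem _ _ _ fun h => hpS (h.trans hpr.symm)
  · intro hinj
    refine hx (hinj ?_).symm
    rw [Set.piecewise_eq_of_mem _ _ _ (show x ∈ S from Reachable.refl x),
      Set.piecewise_eq_of_notMem _ _ _ hφxS]
    rfl

/-- Let `(T, r)` be a finite rooted orientation of a tree (digraph `E` on `V` whose
underlying undirected graph `G` is a tree, each undirected edge being oriented in
exactly one direction). If `(T, r)` has an automorphism fixing `r` that is not the
identity, then `(T, r)` has a non-injective endomorphism fixing `r`. -/
theorem stmt11 {V : Type} [Fintype V] (E : V → V → Prop)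
    (G : SimpleGraph V) (hG : ∀ a b, G.Adj a b ↔ (E a b ∨ E b a))
    (htree : G.IsTree)
    (hanti : ∀ a b, E a b → ¬ E b a)
    (r : V) (φ : V → V)
    (hhom : ∀ a b, E a b → E (φ a) (φ b))
    (hr : φ r = r)
    (hbij : Function.Bijective φ)
    (hinv : ∀ a b, E (φ a) (φ b) → E a b)
    (hne : φ ≠ id) :
    ∃ ψ : V → V, (∀ a b, E a b → E (ψ a) (ψ b)) ∧ ψ r = r ∧ ¬ Function.Injective ψ :=
  stmt11_general E G hG htree r φ hhom hr hne
end

section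
/- Every finite undirected tree has exactly one center or exactly one bicenter: either there is a unique vertex lying in the middle of every longest path, or a unique edge lying in the middle of every longest path (Jordan's theorem). -/
open SimpleGraph Walk

namespace JordanAux

variable {V : Type} {G : SimpleGraph V}

/-- In a tree, any two paths with the same endpoints are equal. -/
lemma path_unique (hG : G.IsTree) {a b : V} (p q : G.Walk a b)
    (hp : p.IsPath) (hq : q.IsPath) : p = q := by
  obtain ⟨-, h⟩ := (SimpleGraph.isTree_iff_existsUnique_path).mp hG
  obtain ⟨r, -, hr⟩ := h a b
  rw [hr p hp, hr q hq]

/-- In a tree, the length of a path equals the distance between its endpoints. -/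
lemma length_eq_dist (hG : G.IsTree) {a b : V} (p : G.Walk a b) (hp : p.IsPath) :
    p.length = G.dist a b := by
  obtain ⟨r, hr, hrl⟩ := hG.isConnected.exists_path_of_dist a b
  rw [path_unique hG p r hp hr, hrl]

/-- Appending two paths meeting only at the junction vertex yields a path. -/
lemma append_isPath {a b c : V} {p : G.Walk a b} {q : G.Walk b c}
    (hp : p.IsPath) (hq : q.IsPath)
    (h : ∀ u, u ∈ p.support → u ∈ q.support → u = b) : (p.append q).IsPath := by
  rw [Walk.isPath_def, Walk.support_append]
  refine List.Nodup.append hp.support_nodup ?_ ?_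
  · exact hq.support_nodup.sublist (List.tail_sublist _)
  · intro u hu hu'
    have hb : u = b := h u hu (List.mem_of_mem_tail hu')
    subst hb
    have := hq.support_nodup
    rw [q.support_eq_cons] at this
    exact (List.nodup_cons.mp this).1 hu'

lemma dist_getVert (hG : G.IsTree) :
    ∀ {a b : V} (p : G.Walk a b), p.IsPath → ∀ i, i ≤ p.length →
      G.dist a (p.getVert i) = i := by
  intro a b p
  induction p with
  | nil =>
    intro _ i hi
    obtain rfl : i = 0 := Nat.le_zero.mp hi
    simp [SimpleGraph.dist_self]
  | @cons u c b h q ih =>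
    classical
    intro hp i hi
    match i with
    | 0 => simp [Walk.getVert_zero, SimpleGraph.dist_self]
    | (j+1) =>
      rw [Walk.getVert_cons_succ]
      have hq : q.IsPath := hp.of_cons
      have hj : j ≤ q.length := by simpa [Walk.length_cons] using hi
      have hw : q.getVert j ∈ q.support :=
        Walk.mem_support_iff_exists_getVert.mpr ⟨j, rfl, hj⟩
      have htake : (q.takeUntil _ hw).IsPath := hq.takeUntil hw
      have hnotin : u ∉ (q.takeUntil _ hw).support := fun hmem =>
        ((Walk.cons_isPath_iff h q).mp hp).2 (q.support_takeUntil_subset hw hmem)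
      have hcons : (Walk.cons h (q.takeUntil _ hw)).IsPath :=
        htake.cons hnotin
      have := length_eq_dist hG _ hcons
      rw [Walk.length_cons] at this
      have h2 : (q.takeUntil _ hw).length = G.dist c (q.getVert j) :=
        length_eq_dist hG _ htake
      rw [ih hq j hj] at h2
      omega

/-- A vertex on a path at a given distance from the start is the `getVert`. -/
lemma getVert_of_dist (hG : G.IsTree) {a b : V} (p : G.Walk a b) (hp : p.IsPath)
    {v : V} (hv : v ∈ p.support) {i : ℕ} (hd : G.dist a v = i) :
    v = p.getVert i := by
  obtain ⟨j, hj, hjl⟩ := Walk.mem_support_iff_exists_getVert.mp hv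
  have := dist_getVert hG p hp j hjl
  rw [hj] at this
  rw [hd] at this
  subst this
  exact hj.symm

lemma dist_add_of_mem_support (hG : G.IsTree) {a b : V} (p : G.Walk a b)
    (hp : p.IsPath) {v : V} (hv : v ∈ p.support) :
    G.dist a v + G.dist v b = p.length := by
  classical
  have h1 := length_eq_dist hG _ (hp.takeUntil hv)
  have h2 := length_eq_dist hG _ (hp.dropUntil hv)
  have h3 := congrArg Walk.length (p.take_spec hv)
  rw [Walk.length_append] at h3
  omega

lemma dist_getVert_getVert (hG : G.IsTree) {a b : V} (p : G.Walk a b)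
    (hp : p.IsPath) {i j : ℕ} (hij : i ≤ j) (hj : j ≤ p.length) :
    G.dist (p.getVert i) (p.getVert j) = j - i := by
  classical
  rcases eq_or_lt_of_le hij with rfl | hlt
  · simp [SimpleGraph.dist_self]
  · set v := p.getVert i with hvdef
    set w := p.getVert j with hwdef
    have hvs : v ∈ p.support := Walk.mem_support_iff_exists_getVert.mpr ⟨i, rfl, hij.trans hj⟩
    have hws : w ∈ p.support := Walk.mem_support_iff_exists_getVert.mpr ⟨j, rfl, hj⟩
    have hdav : G.dist a v = i := dist_getVert hG p hp i (hij.trans hj)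
    have hdaw : G.dist a w = j := dist_getVert hG p hp j hj
    have hsum_v : G.dist a v + G.dist v b = p.length := dist_add_of_mem_support hG p hp hvs
    have hsum_w : G.dist a w + G.dist w b = p.length := dist_add_of_mem_support hG p hp hws
    -- w is in the support of the suffix from v
    have hsplit := p.take_spec hvs
    have hwdrop : w ∈ (p.dropUntil v hvs).support := by
      have hmem : w ∈ ((p.takeUntil v hvs).append (p.dropUntil v hvs)).support := by
        rw [hsplit]; exact hws
      rw [Walk.support_append, List.mem_append] at hmem
      rcases hmem with hmem | hmem
      · exfalso
        obtain ⟨l, hl, hll⟩ := Walk.mem_support_iff_exists_getVert.mp hmem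
        have := dist_getVert hG _ (hp.takeUntil hvs) l hll
        rw [hl] at this
        have hlen : (p.takeUntil v hvs).length = G.dist a v :=
          length_eq_dist hG _ (hp.takeUntil hvs)
        omega
      · exact List.mem_of_mem_tail hmem
    have hdrop_len : (p.dropUntil v hvs).length = G.dist v b :=
      length_eq_dist hG _ (hp.dropUntil hvs)
    have hsum3 : G.dist v w + G.dist w b = (p.dropUntil v hvs).length :=
      dist_add_of_mem_support hG _ (hp.dropUntil hvs) hwdrop
    omega

/-- First-crossing lemma: from any walk `x → y` ending on the support of `p`, we get a
walk from `x` meeting `p.support` only at its endpoint. -/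
lemma cross (p_supp : List V) :
    ∀ {x y : V} (_ : G.Walk x y), y ∈ p_supp →
      ∃ t, t ∈ p_supp ∧ ∃ s : G.Walk x t, ∀ u ∈ s.support, u ∈ p_supp → u = t := by
  intro x y r
  induction r with
  | nil =>
    intro hy
    exact ⟨_, hy, Walk.nil, by intro u hu _; simpa using hu⟩
  | @cons x c y h r ih =>
    intro hy
    by_cases hx : x ∈ p_supp
    · exact ⟨x, hx, Walk.nil, by intro u hu _; simpa using hu⟩
    · obtain ⟨t, ht, s, hs⟩ := ih hy
      refine ⟨t, ht, Walk.cons h s, ?_⟩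
      intro u hu hup
      rw [Walk.support_cons, List.mem_cons] at hu
      rcases hu with rfl | hu
      · exact absurd hup hx
      · exact hs u hu hup

/-- Key bound: there is an index `i` on `p` and `n ≤ min i (L - i)` such that
`x` is within `n + |i - j|` of every vertex `p.getVert j`. -/
lemma key (hG : G.IsTree) {a b : V} (p : G.Walk a b) (hp : p.IsPath)
    (hmax : ∀ (a' b' : V) (q : G.Walk a' b'), q.IsPath → q.length ≤ p.length)
    (x : V) :
    ∃ i ≤ p.length, ∃ n, n ≤ i ∧ n + i ≤ p.length ∧
      ∀ j ≤ p.length, G.dist x (p.getVert j) ≤ n + (i - j) + (j - i) := by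
  classical
  obtain ⟨r⟩ := hG.isConnected.preconnected x b
  obtain ⟨t, ht, s, hs⟩ := cross p.support r p.end_mem_support
  -- replace s by its bypass, a path
  set s' := s.bypass with hs'def
  have hs'p : s'.IsPath := s.bypass_isPath
  have hs'disj : ∀ u ∈ s'.support, u ∈ p.support → u = t := fun u hu =>
    hs u (s.support_bypass_subset hu)
  obtain ⟨i, hti, hiL⟩ := Walk.mem_support_iff_exists_getVert.mp ht
  have hdat : G.dist a t = i := by rw [← hti]; exact dist_getVert hG p hp i hiL
  have hsum : G.dist a t + G.dist t b = p.length := dist_add_of_mem_support hG p hp ht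
  -- bound n ≤ i via the path x → t → b
  have hdrop := hp.dropUntil ht
  have hP1 : (s'.append (p.dropUntil t ht)).IsPath := by
    refine append_isPath hs'p hdrop ?_
    intro u hu hu'
    exact hs'disj u hu (p.support_dropUntil_subset ht hu')
  have hlen1 := hmax _ _ _ hP1
  rw [Walk.length_append] at hlen1
  have hdl : (p.dropUntil t ht).length = G.dist t b := length_eq_dist hG _ hdrop
  -- bound n ≤ L - i via the path x → t → a
  have htake := hp.takeUntil ht
  have hP2 : (s'.append (p.takeUntil t ht).reverse).IsPath := by
    refine append_isPath hs'p htake.reverse ?_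
    intro u hu hu'
    rw [Walk.support_reverse, List.mem_reverse] at hu'
    exact hs'disj u hu (p.support_takeUntil_subset ht hu')
  have hlen2 := hmax _ _ _ hP2
  rw [Walk.length_append, Walk.length_reverse] at hlen2
  have htl : (p.takeUntil t ht).length = G.dist a t := length_eq_dist hG _ htake
  refine ⟨i, hiL, s'.length, by omega, by omega, ?_⟩
  intro j hj
  have htri : G.dist x (p.getVert j) ≤ G.dist x t + G.dist t (p.getVert j) :=
    hG.isConnected.dist_triangle
  have hxt : G.dist x t ≤ s'.length := SimpleGraph.dist_le s'
  have hdist_tj : G.dist t (p.getVert j) ≤ (i - j) + (j - i) := by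
    rcases le_total i j with hij | hij
    · have h := dist_getVert_getVert hG p hp hij hj
      rw [← hti]
      omega
    · have h := dist_getVert_getVert hG p hp hij hiL
      rw [SimpleGraph.dist_comm (u := p.getVert j)] at h
      rw [← hti]
      omega
  omega

lemma ecc_even (hG : G.IsTree) {a b : V} (p : G.Walk a b) (hp : p.IsPath)
    (hmax : ∀ (a' b' : V) (q : G.Walk a' b'), q.IsPath → q.length ≤ p.length)
    {k : ℕ} (hL : p.length = 2 * k) (x : V) : G.dist x (p.getVert k) ≤ k := by
  obtain ⟨i, hiL, n, hn1, hn2, hb⟩ := key hG p hp hmax x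
  have := hb k (by omega)
  omega

lemma ecc_odd (hG : G.IsTree) {a b : V} (p : G.Walk a b) (hp : p.IsPath)
    (hmax : ∀ (a' b' : V) (q : G.Walk a' b'), q.IsPath → q.length ≤ p.length)
    {k : ℕ} (hL : p.length = 2 * k + 1) (x : V) :
    G.dist x (p.getVert k) ≤ k ∨ G.dist x (p.getVert (k + 1)) ≤ k := by
  obtain ⟨i, hiL, n, hn1, hn2, hb⟩ := key hG p hp hmax x
  have h1 := hb k (by omega)
  have h2 := hb (k + 1) (by omega)
  omega

lemma center_helper (hG : G.IsTree) {c d m : V} {k : ℕ} (q : G.Walk c d)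
    (hq : q.IsPath) (hlen : q.length = 2 * k)
    (h1 : G.dist c m ≤ k) (h2 : G.dist d m ≤ k) : q.getVert k = m := by
  have hcd : G.dist c d = 2 * k := by rw [← length_eq_dist hG q hq, hlen]
  have htri : G.dist c d ≤ G.dist c m + G.dist m d := hG.isConnected.dist_triangle
  have hmd : G.dist m d = G.dist d m := SimpleGraph.dist_comm
  have hcm : G.dist c m = k := by omega
  have hmd' : G.dist m d = k := by omega
  obtain ⟨g1, hg1, hg1l⟩ := hG.isConnected.exists_path_of_dist c m
  obtain ⟨g2, hg2, hg2l⟩ := hG.isConnected.exists_path_of_dist m d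
  have hwlen : (g1.append g2).length = G.dist c d := by
    rw [Walk.length_append]; omega
  have hwp : (g1.append g2).IsPath := Walk.isPath_of_length_eq_dist _ hwlen
  have hweq : g1.append g2 = q := path_unique hG _ q hwp hq
  have hmem : m ∈ q.support := by
    rw [← hweq]
    exact Walk.subset_support_append_left _ _ g1.end_mem_support
  exact (getVert_of_dist hG q hq hmem hcm).symm

lemma bicenter_helper (hG : G.IsTree) {c d m₁ m₂ : V} {k : ℕ} (q : G.Walk c d)
    (hq : q.IsPath) (hlen : q.length = 2 * k + 1) (hadj : G.Adj m₁ m₂)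
    (h1 : G.dist c m₁ ≤ k) (h2 : G.dist d m₂ ≤ k) :
    q.getVert k = m₁ ∧ q.getVert (k + 1) = m₂ := by
  have hcd : G.dist c d = 2 * k + 1 := by rw [← length_eq_dist hG q hq, hlen]
  obtain ⟨g1, hg1, hg1l⟩ := hG.isConnected.exists_path_of_dist c m₁
  obtain ⟨g2, hg2, hg2l⟩ := hG.isConnected.exists_path_of_dist m₂ d
  have hm2d : G.dist m₂ d = G.dist d m₂ := SimpleGraph.dist_comm
  set w := g1.append (Walk.cons hadj g2) with hwdef
  have hwlen : w.length = G.dist c m₁ + 1 + G.dist m₂ d := by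
    rw [hwdef, Walk.length_append, Walk.length_cons]; omega
  have hle : G.dist c d ≤ w.length := SimpleGraph.dist_le w
  have hcm : G.dist c m₁ = k := by omega
  have hm2d' : G.dist m₂ d = k := by omega
  have hwlen' : w.length = G.dist c d := by omega
  have hwp : w.IsPath := Walk.isPath_of_length_eq_dist _ hwlen'
  have hweq : w = q := path_unique hG _ q hwp hq
  have hm1mem : m₁ ∈ q.support := by
    rw [← hweq]
    exact Walk.subset_support_append_left _ _ g1.end_mem_support
  have hm2mem : m₂ ∈ q.support := by
    rw [← hweq]
    refine Walk.subset_support_append_right _ _ ?_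
    rw [Walk.support_cons]
    exact List.mem_cons_of_mem _ g2.start_mem_support
  have hdm2 : G.dist c m₂ = k + 1 := by
    have hup : G.dist c m₂ ≤ G.dist c m₁ + G.dist m₁ m₂ := hG.isConnected.dist_triangle
    have hadj1 : G.dist m₁ m₂ ≤ 1 := by
      have := SimpleGraph.dist_le (Walk.cons hadj Walk.nil)
      simpa using this
    have hlow : G.dist c d ≤ G.dist c m₂ + G.dist m₂ d := hG.isConnected.dist_triangle
    omega
  exact ⟨(getVert_of_dist hG q hq hm1mem hcm).symm,
    (getVert_of_dist hG q hq hm2mem hdm2).symm⟩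

end JordanAux



/-- A vertex `v` is a center of the tree `G` if it is the middle vertex of some
longest path (which then has even length). -/
def IsCenter {V : Type} (G : SimpleGraph V) (v : V) : Prop :=
  ∃ (a b : V) (p : G.Walk a b), p.IsPath ∧
    (∀ (a' b' : V) (q : G.Walk a' b'), q.IsPath → q.length ≤ p.length) ∧
    p.length % 2 = 0 ∧ v = p.getVert (p.length / 2)

/-- An edge `e` is a bicenter of the tree `G` if it is the middle edge of some
longest path (which then has odd length). -/
def IsBicenter {V : Type} (G : SimpleGraph V) (e : Sym2 V) : Prop :=
  ∃ (a b : V) (p : G.Walk a b), p.IsPath ∧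
    (∀ (a' b' : V) (q : G.Walk a' b'), q.IsPath → q.length ≤ p.length) ∧
    p.length % 2 = 1 ∧ e = s(p.getVert (p.length / 2), p.getVert (p.length / 2 + 1))


/-- Jordan's theorem: a finite (undirected) tree has exactly one center or
exactly one bicenter. -/
theorem stmt12 {V : Type} [Fintype V] (G : SimpleGraph V) (hG : G.IsTree) :
    Xor' (∃! v : V, IsCenter G v) (∃! e : Sym2 V, IsBicenter G e) := by
  classical
  open JordanAux in
  obtain ⟨v0⟩ : Nonempty V := hG.isConnected.nonempty
  set P : ℕ → Prop := fun n => ∃ (a b : V) (p : G.Walk a b), p.IsPath ∧ p.length = n with hP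
  have h0 : P 0 := ⟨v0, v0, Walk.nil, Walk.IsPath.nil, rfl⟩
  have hbd : ∀ n, P n → n ≤ Fintype.card V := by
    rintro n ⟨a, b, p, hp, rfl⟩
    exact hp.length_lt.le
  obtain ⟨a, b, p, hp, hpl⟩ : P (Nat.findGreatest P (Fintype.card V)) :=
    Nat.findGreatest_spec (Nat.zero_le _) h0
  have hmax : ∀ (a' b' : V) (q : G.Walk a' b'), q.IsPath → q.length ≤ p.length := by
    intro a' b' q hq
    rw [hpl]
    exact Nat.le_findGreatest (hbd _ ⟨a', b', q, hq, rfl⟩) ⟨a', b', q, hq, rfl⟩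
  clear hpl
  have hqlen : ∀ {c d : V} (q : G.Walk c d), q.IsPath →
      (∀ (a' b' : V) (r : G.Walk a' b'), r.IsPath → r.length ≤ q.length) →
      q.length = p.length := fun q hq hqmax =>
    le_antisymm (hmax _ _ q hq) (hqmax _ _ p hp)
  rcases Nat.even_or_odd p.length with ⟨k, hk⟩ | ⟨k, hk⟩
  · -- even case: unique center, no bicenter
    have hk2 : p.length = 2 * k := by omega
    have hmod : p.length % 2 = 0 := by omega
    have hdiv : p.length / 2 = k := by omega
    left
    refine ⟨⟨p.getVert k, ⟨a, b, p, hp, hmax, hmod, by rw [hdiv]⟩, ?_⟩, ?_⟩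
    · rintro v ⟨c, d, q, hq, hqmax, hqmod, hv⟩
      have hql : q.length = p.length := hqlen q hq hqmax
      have h1 : G.dist c (p.getVert k) ≤ k := ecc_even hG p hp hmax hk2 c
      have h2 : G.dist d (p.getVert k) ≤ k := ecc_even hG p hp hmax hk2 d
      have := center_helper hG q hq (by omega) h1 h2
      rw [hv, hql, hdiv, this]
    · rintro ⟨e, ⟨⟨c, d, q, hq, hqmax, hqmod, -⟩, -⟩⟩
      have := hqlen q hq hqmax
      omega
  · -- odd case: unique bicenter, no center
    have hk2 : p.length = 2 * k + 1 := by omega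
    have hmod : p.length % 2 = 1 := by omega
    have hdiv : p.length / 2 = k := by omega
    have hkl : k < p.length := by omega
    have hadj : G.Adj (p.getVert k) (p.getVert (k + 1)) := p.adj_getVert_succ hkl
    right
    refine ⟨⟨s(p.getVert k, p.getVert (k + 1)),
      ⟨a, b, p, hp, hmax, hmod, by rw [hdiv]⟩, ?_⟩, ?_⟩
    · rintro e ⟨c, d, q, hq, hqmax, hqmod, he⟩
      have hql : q.length = p.length := hqlen q hq hqmax
      rw [hql, hdiv] at he
      have hc := ecc_odd hG p hp hmax hk2 c
      have hd := ecc_odd hG p hp hmax hk2 d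
      have hcd : G.dist c d = 2 * k + 1 := by
        rw [← length_eq_dist hG q hq]; omega
      have htri1 : G.dist c d ≤ G.dist c (p.getVert k) + G.dist (p.getVert k) d :=
        hG.isConnected.dist_triangle
      have htri2 : G.dist c d ≤ G.dist c (p.getVert (k + 1)) + G.dist (p.getVert (k + 1)) d :=
        hG.isConnected.dist_triangle
      have hco1 : G.dist (p.getVert k) d = G.dist d (p.getVert k) := SimpleGraph.dist_comm
      have hco2 : G.dist (p.getVert (k + 1)) d = G.dist d (p.getVert (k + 1)) :=
        SimpleGraph.dist_comm
      rcases hc with hc1 | hc2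
      · have hd2 : G.dist d (p.getVert (k + 1)) ≤ k := by
          rcases hd with hd1 | hd2
          · omega
          · exact hd2
        obtain ⟨e1, e2⟩ := bicenter_helper hG q hq (by omega) hadj hc1 hd2
        rw [he, e1, e2]
      · have hd1 : G.dist d (p.getVert k) ≤ k := by
          rcases hd with hd1 | hd2
          · exact hd1
          · omega
        have hrq : q.reverse.IsPath := hq.reverse
        have hrlen : q.reverse.length = 2 * k + 1 := by
          rw [Walk.length_reverse]; omega
        obtain ⟨e1, e2⟩ := bicenter_helper hG q.reverse hrq hrlen hadj hd1 hc2
        rw [Walk.getVert_reverse] at e1 e2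
        have hg1 : q.getVert (k + 1) = p.getVert k := by
          rw [← e1]; congr 1; omega
        have hg2 : q.getVert k = p.getVert (k + 1) := by
          rw [← e2]; congr 1; omega
        rw [he, hg1, hg2, Sym2.eq_swap]
    · rintro ⟨v, ⟨⟨c, d, q, hq, hqmax, hqmod, -⟩, -⟩⟩
      have := hqlen q hq hqmax
      omega
end

section
/- Let A be a finite set, and let C_1, C_2 be finite nonempty sets of positive integers. Suppose a clone on A contains an operation f satisfying the cyclic loop condition Σ_{C_1} and an operation g satisfying Σ_{C_2}; more concretely, suppose f is invariant under the cyclic-shift permutation σ_{C_1} of its index set and g under σ_{C_2}. Then the star product f ⋆ g is invariant under the cyclic-shift permutation σ of the product index set given coordinatewise by (σ_{C_1}, σ_{C_2}). Consequently, if a set of operations closed under star products satisfies Σ_{C_1} and Σ_{C_2}, it satisfies Σ_{C_1 × C_2} (the cyclic loop condition of the product of the corresponding disjoint unions of cycles). -/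
/-- The index set of the disjoint union of cycles associated to a finite set `C` of
positive integers: pairs `(a, k)` with `a ∈ C` and `k ∈ ZMod a`. -/
def CycIdx (C : Finset ℕ) : Type := Σ a : C, ZMod (a : ℕ)

/-- The cyclic-shift permutation `σ_C (a, k) = (a, k + 1)`. -/
def cycShift {C : Finset ℕ} (i : CycIdx C) : CycIdx C := ⟨i.1, i.2 + 1⟩

/-- If `f` satisfies the cyclic loop condition `Σ_{C₁}` (i.e. `f = f_{σ_{C₁}}`) and `g`
satisfies `Σ_{C₂}`, then the star product `f ⋆ g` is invariant under the coordinatewise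
shift `(σ_{C₁}, σ_{C₂})` of the product index set; hence a set of operations closed
under star products satisfying `Σ_{C₁}` and `Σ_{C₂}` satisfies `Σ_{C₁ × C₂}`. -/
theorem stmt15 {A : Type} (C₁ C₂ : Finset ℕ)
    (h₁ : ∀ a ∈ C₁, 0 < a) (h₂ : ∀ a ∈ C₂, 0 < a)
    (f : (CycIdx C₁ → A) → A) (g : (CycIdx C₂ → A) → A)
    (hf : ∀ t : CycIdx C₁ → A, f (fun i => t (cycShift i)) = f t)
    (hg : ∀ t : CycIdx C₂ → A, g (fun j => t (cycShift j)) = g t) :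
    ∀ u : CycIdx C₁ × CycIdx C₂ → A,
      f (fun i => g (fun j => u (cycShift i, cycShift j))) =
      f (fun i => g (fun j => u (i, j))) := by
  intro u
  have : (fun i => g (fun j => u (cycShift i, cycShift j))) =
      fun i => g (fun j => u (cycShift i, j)) := by
    funext i; exact hg (fun j => u (cycShift i, j))
  rw [this]
  exact hf (fun i => g (fun j => u (i, j)))
end

section
/- Let Σ be a minor condition in exactly two variables x and y such that in every identity of Σ both variables appear on each side. Let G be a balanced digraph, i.e., a digraph admitting a homomorphism lvl : G → P_m to a directed path such that lvl(v) = lvl(u) + 1 for every edge (u,v). If G has level-wise polymorphisms satisfying Σ (polymorphisms defined only on tuples of vertices all lying on the same level), then G has (genuine, everywhere-defined) polymorphisms satisfying Σ. -/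
lemma pickIdx_ex {n : ℕ} (f : Fin n → ℕ) (hn : Nonempty (Fin n)) :
    ∃ k : ℕ, ∃ hk : k < n, ∀ j, f ⟨k, hk⟩ ≤ f j := by
  obtain ⟨i, hi⟩ := Finite.exists_min f
  exact ⟨i.1, i.2, fun j => hi j⟩

open Classical in
/-- The least index attaining the minimum of `f`. -/
noncomputable def pickIdx {n : ℕ} (f : Fin n → ℕ) (hn : Nonempty (Fin n)) : Fin n :=
  ⟨Nat.find (pickIdx_ex f hn), (Nat.find_spec (pickIdx_ex f hn)).choose⟩

lemma pickIdx_spec {n : ℕ} (f : Fin n → ℕ) (hn : Nonempty (Fin n)) :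
    ∀ j, f (pickIdx f hn) ≤ f j := by
  intro j
  show f ⟨Nat.find (pickIdx_ex f hn), (Nat.find_spec (pickIdx_ex f hn)).choose⟩ ≤ f j
  exact (Nat.find_spec (pickIdx_ex f hn)).choose_spec j

lemma pickIdx_congr {n : ℕ} (f g : Fin n → ℕ) (hn : Nonempty (Fin n))
    (h : ∀ i, g i = f i + 1) : pickIdx f hn = pickIdx g hn := by
  unfold pickIdx
  apply Fin.ext
  simp only
  apply le_antisymm
  · exact Nat.find_mono (fun k hk => ⟨hk.choose, fun j => by
      have := hk.choose_spec j; have h1 := h ⟨k, hk.choose⟩; have h2 := h j; omega⟩)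
  · exact Nat.find_mono (fun k hk => ⟨hk.choose, fun j => by
      have := hk.choose_spec j; have h1 := h ⟨k, hk.choose⟩; have h2 := h j; omega⟩)

lemma pickIdx_two {V : Type} (lvl : V → ℕ) (x : Fin 2 → V)
    (hx : lvl (x 0) ≠ lvl (x 1)) {n : ℕ} (ρ : Fin n → Fin 2)
    (hρ : Function.Surjective ρ) (hn : Nonempty (Fin n)) :
    (x ∘ ρ) (pickIdx (fun i => lvl ((x ∘ ρ) i)) hn)
      = if lvl (x 0) < lvl (x 1) then x 0 else x 1 := by
  obtain ⟨j0, hj0⟩ := hρ 0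
  obtain ⟨j1, hj1⟩ := hρ 1
  have hspec := pickIdx_spec (fun i => lvl ((x ∘ ρ) i)) hn
  have h0 := hspec j0
  have h1 := hspec j1
  simp only [Function.comp, hj0, hj1] at h0 h1 ⊢
  have htwo : ∀ v : Fin 2, v = 0 ∨ v = 1 := by decide
  rcases htwo (ρ (pickIdx (fun i => lvl (x (ρ i))) hn)) with h | h <;>
    rw [h] at h0 h1 ⊢ <;> split <;> first | rfl | omega

/-- Let `Σ` be a minor condition in exactly two variables (variables indexed by
`Fin 2`) such that both variables appear on each side of every identity (the maps
`σ l, τ l : Fin (ar _) → Fin 2` are surjective). Let `G = (V, E)` be a balanced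
digraph, with level map `lvl : V → ℕ` bounded by `m` (a homomorphism to the path
`P_m`). If `G` has level-wise polymorphisms satisfying `Σ` (functions that are
polymorphisms on same-level tuples and satisfy the identities on same-level
instantiations), then `G` has genuine polymorphisms satisfying `Σ`. -/
theorem stmt19 {V : Type} [Fintype V] (E : V → V → Prop)
    (m : ℕ) (lvl : V → ℕ)
    (hbound : ∀ v, lvl v ≤ m)
    (hlvl : ∀ u v, E u v → lvl v = lvl u + 1)
    (S : Type) (ar : S → ℕ)
    (Λ : Type) (lhs rhs : Λ → S)
    (σ : (l : Λ) → Fin (ar (lhs l)) → Fin 2)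
    (τ : (l : Λ) → Fin (ar (rhs l)) → Fin 2)
    (hσ : ∀ l, Function.Surjective (σ l))
    (hτ : ∀ l, Function.Surjective (τ l))
    (ι : (s : S) → (Fin (ar s) → V) → V)
    (hpol : ∀ s, ∀ x y : Fin (ar s) → V, (∀ i j, lvl (x i) = lvl (x j)) →
        (∀ i, E (x i) (y i)) → E (ι s x) (ι s y))
    (hsat : ∀ l : Λ, ∀ x : Fin 2 → V, lvl (x 0) = lvl (x 1) →
        ι (lhs l) (x ∘ σ l) = ι (rhs l) (x ∘ τ l)) :
    ∃ ι' : (s : S) → (Fin (ar s) → V) → V,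
      (∀ s, ∀ x y : Fin (ar s) → V, (∀ i, E (x i) (y i)) → E (ι' s x) (ι' s y)) ∧
      (∀ l : Λ, ∀ x : Fin 2 → V, ι' (lhs l) (x ∘ σ l) = ι' (rhs l) (x ∘ τ l)) := by
  classical
  have h2 : ∀ v : Fin 2, v = 0 ∨ v = 1 := by decide
  refine ⟨fun s y =>
    if h : ∀ i j, lvl (y i) = lvl (y j) then ι s y
    else y (pickIdx (fun i => lvl (y i)) (by
      by_contra hne
      exact h fun i j => absurd ⟨i⟩ hne)), ?_, ?_⟩
  · intro s x y hE
    dsimp only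
    have hstep : ∀ i, lvl (y i) = lvl (x i) + 1 := fun i => hlvl _ _ (hE i)
    have hiff : (∀ i j, lvl (x i) = lvl (x j)) ↔ (∀ i j, lvl (y i) = lvl (y j)) := by
      constructor <;> intro h i j <;> have h1 := hstep i <;> have h2 := hstep j <;>
        have := h i j <;> omega
    by_cases h : ∀ i j, lvl (x i) = lvl (x j)
    · rw [dif_pos h, dif_pos (hiff.mp h)]
      exact hpol s x y h hE
    · rw [dif_neg h, dif_neg (fun hy => h (hiff.mpr hy))]
      have hne : Nonempty (Fin (ar s)) := by
        by_contra hne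
        exact h fun i j => absurd ⟨i⟩ hne
      rw [show pickIdx (fun i => lvl (y i)) _ = pickIdx (fun i => lvl (x i)) hne from
        (pickIdx_congr _ _ hne hstep).symm]
      exact hE _
  · intro l x
    dsimp only
    by_cases hx : lvl (x 0) = lvl (x 1)
    · have hvc : ∀ v : Fin 2, lvl (x v) = lvl (x 0) := by
        intro v; rcases h2 v with h | h <;> rw [h]; exact hx.symm
      have hall : ∀ (n : ℕ) (ρ : Fin n → Fin 2), ∀ i j : Fin n,
          lvl ((x ∘ ρ) i) = lvl ((x ∘ ρ) j) := by
        intro n ρ i j; simp only [Function.comp]; rw [hvc (ρ i), hvc (ρ j)]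
      rw [dif_pos (hall _ (σ l)), dif_pos (hall _ (τ l))]
      exact hsat l x hx
    · have hne : ∀ (n : ℕ) (ρ : Fin n → Fin 2), Function.Surjective ρ →
          ¬ ∀ i j, lvl ((x ∘ ρ) i) = lvl ((x ∘ ρ) j) := by
        intro n ρ hρ h
        obtain ⟨j0, hj0⟩ := hρ 0
        obtain ⟨j1, hj1⟩ := hρ 1
        exact hx (by have := h j0 j1; simpa [Function.comp, hj0, hj1] using this)
      rw [dif_neg (hne _ (σ l) (hσ l)), dif_neg (hne _ (τ l) (hτ l))]
      rw [pickIdx_two lvl x hx (σ l) (hσ l), pickIdx_two lvl x hx (τ l) (hτ l)]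
end
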